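/- For every integer m ≥ 1, the spaces h_0(Δ^(m)) and h_c(Δ^(m)), each equipped with the metric induced by the norm ‖x‖ = sup_n |(H^(m)x)_n|, are separable. -/

import Mathlib

/-! `H^(m)` is a triangle whose diagonal entries `1/(2n+1)` never vanish, so forward
substitution inverts `x ↦ H^(m) x` on all real sequences. By the definition of the norm this
bijection is an isometry onto sequences with the sup norm, carrying `h_0(Δ^(m))` onto `c₀` and
`h_c(Δ^(m))` onto `c`. Separability is pulled back from `c₀`, where finitely supported rational
sequences are dense, and from `c`, where these sequences shifted by rational constants are. -/

open Filter Finset Topology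

/- Real sequences are modelled as functions `ℕ → ℝ`, where the Lean index `n : ℕ`
corresponds to the paper's index `n + 1` (the paper indexes sequences by `k ≥ 1`).
Thus the paper's entry `h_{nk} = ∑_{i=k}^{n} (-1)^{i-k} C(m, i-k) / (n+i-1)`
(for `1 ≤ k ≤ n`) becomes, with 0-based indices,
`hMat m n k = ∑_{i ∈ Icc k n} (-1)^{i-k} C(m, i-k) / (n+i+1)`. -/

/-- The entries of the triangle matrix `H^(m) = H Δ^(m)` (0-based indexing). -/
noncomputable def hMat (m n k : ℕ) : ℝ :=
  ∑ i ∈ Finset.Icc k n, (-1 : ℝ) ^ (i - k) * (Nat.choose m (i - k) : ℝ) / ((n + i + 1 : ℕ) : ℝ)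

/-- The `H^(m)`-transform of a sequence: `(H^(m) x)_n = ∑_{k=1}^{n} h_{nk} x_k`. -/
noncomputable def hTrans (m : ℕ) (x : ℕ → ℝ) (n : ℕ) : ℝ :=
  ∑ k ∈ Finset.range (n + 1), hMat m n k * x k

/-- `h_0(Δ^(m))`: sequences whose `H^(m)`-transform tends to `0`. -/
def hZero (m : ℕ) : Set (ℕ → ℝ) := {x | Tendsto (hTrans m x) atTop (𝓝 0)}

/-- `h_c(Δ^(m))`: sequences whose `H^(m)`-transform converges. -/
def hConv (m : ℕ) : Set (ℕ → ℝ) := {x | ∃ L : ℝ, Tendsto (hTrans m x) atTop (𝓝 L)}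

/-- `h_∞(Δ^(m))`: sequences whose `H^(m)`-transform is bounded. -/
def hBdd (m : ℕ) : Set (ℕ → ℝ) := {x | ∃ M : ℝ, ∀ n, |hTrans m x n| ≤ M}

/-- The space `c₀` of null real sequences. -/
def c0Seq : Set (ℕ → ℝ) := {y | Tendsto y atTop (𝓝 0)}

/-- The space `c` of convergent real sequences. -/
def cSeq : Set (ℕ → ℝ) := {y | ∃ L : ℝ, Tendsto y atTop (𝓝 L)}

/-- The space `ℓ∞` of bounded real sequences. -/
def linfSeq : Set (ℕ → ℝ) := {y | ∃ M : ℝ, ∀ n, |y n| ≤ M}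

/-- The sup norm `‖y‖ = sup_n |y_n|` of a sequence. -/
noncomputable def supNorm (y : ℕ → ℝ) : ℝ := ⨆ n, |y n|

/-- The norm `‖x‖ = sup_n |(H^(m) x)_n|` on the Hilbert difference sequence spaces. -/
noncomputable def hNorm (m : ℕ) (x : ℕ → ℝ) : ℝ := supNorm (hTrans m x)

noncomputable def triangleSolve {K : Type*} [Field K] (a : ℕ → ℕ → K) (y : ℕ → K) : ℕ → K
  | n => (y n - ∑ k ∈ (range n).attach, a n k * triangleSolve a y k) / a n n
  decreasing_by exact mem_range.mp k.2

theorem sum_mul_triangleSolve {K : Type*} [Field K] {a : ℕ → ℕ → K} (ha : ∀ n, a n n ≠ 0)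
    (y : ℕ → K) (n : ℕ) : ∑ k ∈ range (n + 1), a n k * triangleSolve a y k = y n := by
  rw [sum_range_succ, triangleSolve, mul_div_cancel₀ _ (ha n),
    ← sum_attach (range n) (fun k => a n k * triangleSolve a y k)]
  ring

theorem hMat_self (m n : ℕ) : hMat m n n = ((n + n + 1 : ℕ) : ℝ)⁻¹ := by
  simp [hMat]

theorem hMat_self_ne_zero (m n : ℕ) : hMat m n n ≠ 0 := by
  rw [hMat_self]
  positivity

theorem hTrans_triangleSolve (m : ℕ) (y : ℕ → ℝ) : hTrans m (triangleSolve (hMat m) y) = y :=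
  funext (sum_mul_triangleSolve (hMat_self_ne_zero m) y)

theorem hTrans_sub (m : ℕ) (x y : ℕ → ℝ) : hTrans m (x - y) = hTrans m x - hTrans m y := by
  funext n
  simp [hTrans, mul_sub, sum_sub_distrib]

theorem supNorm_le {y : ℕ → ℝ} {ε : ℝ} (hε : 0 ≤ ε) (h : ∀ n, |y n| ≤ ε) : supNorm y ≤ ε :=
  Real.iSup_le h hε

def SupDenseIn (D S : Set (ℕ → ℝ)) : Prop :=
  ∀ y ∈ S, ∀ ε > 0, ∃ d ∈ D, ∀ n, |y n - d n| ≤ ε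

theorem exists_countable_hNorm_dense (m : ℕ) {D S : Set (ℕ → ℝ)} (hD : D.Countable)
    (hDS : D ⊆ S) (hdense : SupDenseIn D S) :
    ∃ D' : Set (ℕ → ℝ), D'.Countable ∧ D' ⊆ hTrans m ⁻¹' S ∧
      ∀ x ∈ hTrans m ⁻¹' S, ∀ ε : ℝ, 0 < ε → ∃ d ∈ D', hNorm m (x - d) < ε := by
  refine ⟨triangleSolve (hMat m) '' D, hD.image _, ?_, ?_⟩
  · rintro _ ⟨d, hd, rfl⟩
    simpa [Set.mem_preimage, hTrans_triangleSolve] using hDS hd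
  · intro x hx ε hε
    obtain ⟨d, hd, hxd⟩ := hdense _ hx (ε / 2) (by positivity)
    refine ⟨_, ⟨d, hd, rfl⟩, ?_⟩
    have : hNorm m (x - triangleSolve (hMat m) d) ≤ ε / 2 := by
      refine supNorm_le (by positivity) fun n => ?_
      simpa [hTrans_sub, hTrans_triangleSolve] using hxd n
    linarith

def finRatSeq : Set (ℕ → ℝ) := Set.range fun (f : ℕ →₀ ℚ) n => ((f n : ℚ) : ℝ)

theorem finRatSeq_countable : finRatSeq.Countable :=
  Set.countable_range _

theorem finRatSeq_subset_c0Seq : finRatSeq ⊆ c0Seq := by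
  rintro _ ⟨f, rfl⟩
  show Tendsto _ atTop (𝓝 0)
  rw [← Nat.cofinite_eq_atTop]
  refine (tendsto_cofinite_pure_iff.mpr ?_).mono_right (pure_le_nhds 0)
  exact f.hasFiniteSupport.subset (by intro n; simp)

theorem supDenseIn_finRatSeq_c0Seq : SupDenseIn finRatSeq c0Seq := by
  intro y hy ε hε
  obtain ⟨N, hN⟩ := Metric.tendsto_atTop.mp hy ε hε
  choose r hr using fun n => exists_rat_near (y n) hε
  classical
  refine ⟨_, ⟨Finsupp.indicator (range N) fun n _ => r n, rfl⟩, fun n => ?_⟩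
  by_cases hn : n < N
  · simpa [Finsupp.indicator_apply, hn] using (hr n).le
  · simpa [Finsupp.indicator_apply, hn, Real.dist_eq] using (hN n (not_lt.mp hn)).le

theorem supDenseIn_finRatSeq_add_const_cSeq :
    SupDenseIn (⋃ c : ℚ, (· + fun _ => (c : ℝ)) '' finRatSeq) cSeq := by
  rintro y ⟨L, hL⟩ ε hε
  obtain ⟨c, hc⟩ := exists_rat_near L (half_pos hε)
  obtain ⟨d, hd, hyd⟩ :=
    supDenseIn_finRatSeq_c0Seq (y - fun _ => L) (tendsto_sub_nhds_zero_iff.mpr hL) (ε / 2)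
      (half_pos hε)
  refine ⟨_, Set.mem_iUnion.mpr ⟨c, d, hd, rfl⟩, fun n => ?_⟩
  calc |y n - (d n + c)| = |(y n - L - d n) + (L - c)| := by ring_nf
    _ ≤ |y n - L - d n| + |L - c| := abs_add_le _ _
    _ ≤ ε := by linarith [show |y n - L - d n| ≤ ε / 2 from hyd n, hc.le]

theorem finRatSeq_add_const_subset_cSeq :
    (⋃ c : ℚ, (· + fun _ => (c : ℝ)) '' finRatSeq) ⊆ cSeq := by
  simp only [Set.iUnion_subset_iff, Set.image_subset_iff]
  intro c d hd
  have hdc := (finRatSeq_subset_c0Seq hd).add_const (c : ℝ)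
  rw [zero_add] at hdc
  exact ⟨c, hdc⟩

theorem hilbert_diff_separable_general (m : ℕ) :
    (∃ D : Set (ℕ → ℝ), D.Countable ∧ D ⊆ hZero m ∧
      ∀ x ∈ hZero m, ∀ ε : ℝ, 0 < ε → ∃ d ∈ D, hNorm m (x - d) < ε) ∧
    (∃ D : Set (ℕ → ℝ), D.Countable ∧ D ⊆ hConv m ∧
      ∀ x ∈ hConv m, ∀ ε : ℝ, 0 < ε → ∃ d ∈ D, hNorm m (x - d) < ε) :=
  ⟨exists_countable_hNorm_dense m finRatSeq_countable finRatSeq_subset_c0Seq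
      supDenseIn_finRatSeq_c0Seq,
    exists_countable_hNorm_dense m
      (Set.countable_iUnion fun _ => finRatSeq_countable.image _)
      finRatSeq_add_const_subset_cSeq supDenseIn_finRatSeq_add_const_cSeq⟩

/-- `h_0(Δ^(m))` and `h_c(Δ^(m))`, with the metric induced by `‖x‖ = sup_n |(H^(m) x)_n|`,
are separable. -/
theorem hilbert_diff_separable (m : ℕ) (hm : 1 ≤ m) :
    (∃ D : Set (ℕ → ℝ), D.Countable ∧ D ⊆ hZero m ∧
      ∀ x ∈ hZero m, ∀ ε : ℝ, 0 < ε → ∃ d ∈ D, hNorm m (x - d) < ε) ∧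
    (∃ D : Set (ℕ → ℝ), D.Countable ∧ D ⊆ hConv m ∧
      ∀ x ∈ hConv m, ∀ ε : ℝ, 0 < ε → ∃ d ∈ D, hNorm m (x - d) < ε) :=
  hilbert_diff_separable_general m
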